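/- Let L₁ ⊆ A* and L₂ ⊆ B* be automatic structures for surjective monoid homomorphisms π₁ : A* → G and π₂ : B* → G onto the same group G. Then L₁ and L₂ are equivalent if and only if L₁ ∪ L₂ has the Hausdorff closeness property with respect to the natural map π₃ : (A ⊔ B)* → G and the word metric d_{A⊔B}. -/

import Mathlib

open scoped NNReal

namespace Auto

/-- The generating set `Aπ ∪ (Aπ)⁻¹` of `G` determined by `π : A* → G`. -/
def gens {A G : Type*} [Group G] (π : FreeMonoid A →* G) : Set G :=
  (Set.range fun a : A => π (FreeMonoid.of a)) ∪
    Set.range fun a : A => (π (FreeMonoid.of a))⁻¹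

/-- The word metric `d_A` on `G`: the least `n` such that `g⁻¹h` is a product of `n`
elements of `Aπ ∪ (Aπ)⁻¹`. -/
noncomputable def wdist {A G : Type*} [Group G] (π : FreeMonoid A →* G) (g h : G) : ℕ :=
  sInf {n : ℕ | ∃ l : List G, l.length = n ∧ (∀ x ∈ l, x ∈ gens π) ∧ l.prod = g⁻¹ * h}

/-- Evaluation of a word of `A*` in `G`. -/
def evalW {A G : Type*} [Group G] (π : FreeMonoid A →* G) (w : List A) : G :=
  π (FreeMonoid.ofList w)

/-- `u` and `v` `p`-fellow travel: `d_A(u^[n]π, v^[n]π) ≤ p` for all `n`. -/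
def FellowTravel {A G : Type*} [Group G] (π : FreeMonoid A →* G) (p : ℝ≥0)
    (u v : List A) : Prop :=
  ∀ n : ℕ, (wdist π (evalW π (u.take n)) (evalW π (v.take n)) : ℝ≥0) ≤ p

/-- `u` and `v` are `p`-meeting-fellow-travellers. -/
def MFT {A G : Type*} [Group G] (π : FreeMonoid A →* G) (p : ℝ≥0) (u v : List A) : Prop :=
  FellowTravel π p u v ∧ evalW π u = evalW π v

/-- A language is regular if it is accepted by a finite-state automaton. -/
def IsRegular {A : Type*} (L : Language A) : Prop :=
  ∃ (σ : Type) (_ : Fintype σ) (M : DFA A σ), M.accepts = L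

/-- `L` is an automatic structure for `π`. -/
structure IsAutomaticStructure {A G : Type*} [Group G] (π : FreeMonoid A →* G)
    (L : Language A) : Prop where
  regular : IsRegular L
  onto : ∀ g : G, ∃ w ∈ L, evalW π w = g
  ft : ∃ N : ℕ, ∀ u ∈ L, ∀ v ∈ L,
    wdist π (evalW π u) (evalW π v) ≤ 1 → FellowTravel π N u v

/-- Evaluation of an element of `A ∪ {ε}`. -/
def evalOpt {A G : Type*} [Group G] (π : FreeMonoid A →* G) : Option A → G
  | none => 1
  | some a => π (FreeMonoid.of a)

/-- `L` is a biautomatic structure for `π`. -/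
structure IsBiautomaticStructure {A G : Type*} [Group G] (π : FreeMonoid A →* G)
    (L : Language A) extends IsAutomaticStructure π L : Prop where
  bi : ∃ N : ℕ, ∀ u ∈ L, ∀ v ∈ L, ∀ a : Option A,
    evalW π v = evalOpt π a * evalW π u →
    ∀ n : ℕ, wdist π (evalOpt π a * evalW π (u.take n)) (evalW π (v.take n)) ≤ N

/-- A language is factorial if it is closed under taking factors. -/
def IsFactorial {A : Type*} (L : Language A) : Prop :=
  ∀ u ∈ L, ∀ v : List A, v <:+: u → v ∈ L

/-- `D : ℝ≥0 → ℝ≥0` is a departure function for `(G, L)`. -/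
def IsDepartureFunction {A G : Type*} [Group G] (π : FreeMonoid A →* G) (L : Language A)
    (D : ℝ≥0 → ℝ≥0) : Prop :=
  ∀ w ∈ L, ∀ r : ℝ≥0, ∀ s t : ℕ, D r ≤ (t : ℝ≥0) → s + t ≤ w.length →
    r < (wdist π (evalW π (w.take s)) (evalW π (w.take (s + t))) : ℝ≥0)

/-- Every point of `S` is within distance `N` of `T`. -/
def NbhdIn {A G : Type*} [Group G] (π : FreeMonoid A →* G) (N : ℕ) (S T : Set G) : Prop :=
  ∀ s ∈ S, ∃ t ∈ T, wdist π s t ≤ N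

/-- The Hausdorff distance between `S` and `T` is at most `N`. -/
def HausdorffLE {A G : Type*} [Group G] (π : FreeMonoid A →* G) (N : ℕ)
    (S T : Set G) : Prop :=
  NbhdIn π N S T ∧ NbhdIn π N T S

/-- `H` is an `L`-quasiconvex subgroup of `G`. -/
def IsQuasiconvex {A G : Type*} [Group G] (π : FreeMonoid A →* G) (L : Language A)
    (H : Subgroup G) : Prop :=
  ∃ k : ℕ, ∀ h ∈ H, ∀ h' ∈ H, ∀ w ∈ L, h * evalW π w = h' →
    ∀ n : ℕ, ∃ z ∈ H, wdist π (h * evalW π (w.take n)) z ≤ k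

/-- The bounded reduction property for `(φ, L, L')`. -/
def BRP {A B G G' : Type*} [Group G] [Group G'] (π : FreeMonoid A →* G)
    (π' : FreeMonoid B →* G') (φ : G →* G') (L : Language A) (L' : Language B) : Prop :=
  ∃ N : ℕ, ∀ x : G, ∀ α ∈ L, ∀ β ∈ L', evalW π' β = φ (evalW π α) →
    HausdorffLE π' N (Set.range fun n : ℕ => φ (x * evalW π (α.take n)))
      (Set.range fun n : ℕ => φ x * evalW π' (β.take n))

/-- The synchronous bounded reduction property for `(φ, L, L')`. -/
def SyncBRP {A B G G' : Type*} [Group G] [Group G'] (π : FreeMonoid A →* G)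
    (π' : FreeMonoid B →* G') (φ : G →* G') (L : Language A) (L' : Language B) : Prop :=
  ∃ N : ℕ, ∀ x : G, ∀ α ∈ L, ∀ β ∈ L', evalW π' β = φ (evalW π α) →
    ∀ n : ℕ, wdist π' (φ (x * evalW π (α.take n))) (φ x * evalW π' (β.take n)) ≤ N

/-- The fellow traveller bounded reduction property (FT-BRP) for `(φ, L, L')`. -/
def FTBRP {A B G G' : Type*} [Group G] [Group G'] (π : FreeMonoid A →* G)
    (π' : FreeMonoid B →* G') (φ : G →* G') (L : Language A) (L' : Language B) : Prop :=
  ∀ p : ℝ≥0, ∃ q : ℝ≥0,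
    ∀ u₁ ∈ L, ∀ u₂ ∈ L, ∀ u₃ ∈ L, ∀ u₁' ∈ L', ∀ u₂' ∈ L', ∀ u₃' ∈ L',
      evalW π' u₁' = φ (evalW π u₁) → evalW π' u₂' = φ (evalW π u₂) →
        evalW π' u₃' = φ (evalW π u₃) →
          MFT π p (u₁ ++ u₂) u₃ → MFT π' q (u₁' ++ u₂') u₃'

/-- The natural homomorphism `(A ⊔ B)* → G` agreeing with `π₁` on `A` and `π₂` on `B`. -/
def sumHom {A B G : Type*} [Group G] (π₁ : FreeMonoid A →* G) (π₂ : FreeMonoid B →* G) :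
    FreeMonoid (A ⊕ B) →* G :=
  FreeMonoid.lift (Sum.elim (fun a => π₁ (FreeMonoid.of a)) fun b => π₂ (FreeMonoid.of b))

/-- The union `L₁ ∪ L₂` viewed as a language over `A ⊔ B`. -/
def unionLang {A B : Type*} (L₁ : Language A) (L₂ : Language B) : Language (A ⊕ B) :=
  {w : List (A ⊕ B) | (∃ u ∈ L₁, w = u.map Sum.inl) ∨ ∃ v ∈ L₂, w = v.map Sum.inr}

/-- `L` is an asynchronous automatic structure for `π`. -/
def IsAsyncAutomaticStructure {A G : Type*} [Group G] (π : FreeMonoid A →* G)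
    (L : Language A) : Prop :=
  IsRegular L ∧ (∀ g : G, ∃ w ∈ L, evalW π w = g) ∧
    ∃ p : ℕ, ∀ u ∈ L, ∀ v ∈ L, wdist π (evalW π u) (evalW π v) ≤ 1 →
      ∃ φ ψ : ℕ → ℕ, Monotone φ ∧ Monotone ψ ∧
        Function.Surjective φ ∧ Function.Surjective ψ ∧
          ∀ t : ℕ, wdist π (evalW π (u.take (φ t))) (evalW π (v.take (ψ t))) ≤ p

/-- `L₁` and `L₂` are equivalent automatic structures. -/
def LangEquivalent {A B G : Type*} [Group G] (π₁ : FreeMonoid A →* G)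
    (π₂ : FreeMonoid B →* G) (L₁ : Language A) (L₂ : Language B) : Prop :=
  IsAsyncAutomaticStructure (sumHom π₁ π₂) (unionLang L₁ L₂)

/-- `L₁` and `L₂` are synchronously equivalent automatic structures. -/
def LangSyncEquivalent {A B G : Type*} [Group G] (π₁ : FreeMonoid A →* G)
    (π₂ : FreeMonoid B →* G) (L₁ : Language A) (L₂ : Language B) : Prop :=
  IsAutomaticStructure (sumHom π₁ π₂) (unionLang L₁ L₂)

/-- `L` has the Hausdorff closeness property. -/
def HausClose {A G : Type*} [Group G] (π : FreeMonoid A →* G) (L : Language A) : Prop :=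
  ∃ N : ℕ, ∀ u ∈ L, ∀ v ∈ L, wdist π (evalW π u) (evalW π v) ≤ 1 →
    HausdorffLE π N (Set.range fun n : ℕ => evalW π (u.take n))
      (Set.range fun n : ℕ => evalW π (v.take n))

/-- The padded alphabet `C = (A×B) ∪ (A×{$}) ∪ ({$}×B)` of convolution. -/
abbrev ConvAlphabet (A B : Type*) := (A × B) ⊕ (A ⊕ B)

/-- The convolution `u ⋄ v` of two words. -/
def conv {A B : Type*} : List A → List B → List (ConvAlphabet A B)
  | [], [] => []
  | [], b :: v => Sum.inr (Sum.inr b) :: conv [] v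
  | a :: u, [] => Sum.inr (Sum.inl a) :: conv u []
  | a :: u, b :: v => Sum.inl (a, b) :: conv u v
  termination_by u v => u.length + v.length

/-- The convolution `L₁ ⋄ L₂` of two languages. -/
def convLang {A B : Type*} (L₁ : Language A) (L₂ : Language B) :
    Language (ConvAlphabet A B) :=
  {w : List (ConvAlphabet A B) | ∃ u ∈ L₁, ∃ v ∈ L₂, w = conv u v}

/-- The natural homomorphism `C* → G × G'` for the convolution alphabet. -/
def convHom {A B G G' : Type*} [Group G] [Group G'] (π₁ : FreeMonoid A →* G)
    (π₂ : FreeMonoid B →* G') : FreeMonoid (ConvAlphabet A B) →* G × G' :=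
  FreeMonoid.lift fun c =>
    match c with
    | Sum.inl (a, b) => (π₁ (FreeMonoid.of a), π₂ (FreeMonoid.of b))
    | Sum.inr (Sum.inl a) => (π₁ (FreeMonoid.of a), 1)
    | Sum.inr (Sum.inr b) => (1, π₂ (FreeMonoid.of b))

/-- A group is automatic if it admits an automatic structure over some finite alphabet. -/
def IsAutomaticGroup (G : Type*) [Group G] : Prop :=
  ∃ (A : Type) (_ : Fintype A) (π : FreeMonoid A →* G) (L : Language A),
    IsAutomaticStructure π L

end Auto

open Auto

/-!
One direction is immediate: surjective reparametrizations put each path in a bounded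
neighbourhood of the other. Conversely, replace every word of `L₁ ∪ L₂` by a shortest
representative of its value in the same `Lᵢ`; as `Lᵢ` is automatic, the two words fellow
travel synchronously. Cutting and pasting, with the finitely many states of an automaton and the
finitely many group elements of bounded length, shows that shortest representatives in a regular
language have a departure function: a subword whose endpoints are at distance `r` has length at
most `D r`. For two such paths at Hausdorff distance at most `N`, matching each point of one with
a nearby point of the other gives an index map with bounded jumps that can only run backwards for
a bounded time. Its running maximum is monotone, and a unit-step walk along its graph yields the
two reparametrizations.
-/

namespace Auto

section WordMetric

variable {Γ G : Type*} [Group G] {π : FreeMonoid Γ →* G}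

@[simp]
lemma evalW_nil : evalW π [] = 1 := map_one π

@[simp]
lemma evalW_cons (a : Γ) (w : List Γ) : evalW π (a :: w) = π (FreeMonoid.of a) * evalW π w :=
  map_mul π (FreeMonoid.of a) (FreeMonoid.ofList w)

@[simp]
lemma evalW_append (u v : List Γ) : evalW π (u ++ v) = evalW π u * evalW π v :=
  map_mul π _ _

lemma evalW_eq_prod (w : List Γ) : evalW π w = (w.map (π ∘ FreeMonoid.of)).prod := by
  induction w with
  | nil => simp
  | cons a w ih => simp [ih]

lemma inv_mem_gens {x : G} (hx : x ∈ gens π) : x⁻¹ ∈ gens π := by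
  rcases hx with ⟨a, rfl⟩ | ⟨a, rfl⟩
  · exact Or.inr ⟨a, rfl⟩
  · exact Or.inl ⟨a, (inv_inv _).symm⟩

lemma wdist_le_length {g h : G} {l : List G} (hl : ∀ x ∈ l, x ∈ gens π)
    (hprod : l.prod = g⁻¹ * h) : wdist π g h ≤ l.length :=
  Nat.sInf_le ⟨l, rfl, hl, hprod⟩

lemma exists_list_length_eq_wdist (hπ : Function.Surjective π) (g h : G) :
    ∃ l : List G, l.length = wdist π g h ∧ (∀ x ∈ l, x ∈ gens π) ∧
      l.prod = g⁻¹ * h := by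
  obtain ⟨w, hw⟩ := hπ (g⁻¹ * h)
  refine Nat.sInf_mem (s := {n | ∃ l : List G, l.length = n ∧ (∀ x ∈ l, x ∈ gens π) ∧
    l.prod = g⁻¹ * h}) ⟨_, _, rfl, ?_, (evalW_eq_prod (FreeMonoid.toList w)).symm.trans hw⟩
  simp only [List.mem_map, Function.comp_apply]
  rintro _ ⟨a, -, rfl⟩
  exact Or.inl ⟨a, rfl⟩

@[simp]
lemma wdist_self (g : G) : wdist π g g = 0 :=
  Nat.le_zero.mp (wdist_le_length (l := []) (by simp) (by simp))

lemma wdist_mul_left (g h k : G) : wdist π (g * h) (g * k) = wdist π h k := by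
  simp only [wdist, mul_inv_rev, mul_assoc, inv_mul_cancel_left]

lemma wdist_comm (g h : G) : wdist π g h = wdist π h g := by
  unfold wdist
  congr 1
  ext n
  constructor <;>
  · rintro ⟨l, rfl, hl, hprod⟩
    refine ⟨(l.map (·⁻¹)).reverse, by simp, ?_, ?_⟩
    · simpa using fun x hx => by simpa using inv_mem_gens (hl x⁻¹ hx)
    · rw [← List.prod_inv_reverse, hprod, mul_inv_rev, inv_inv]

lemma wdist_triangle (hπ : Function.Surjective π) (g h k : G) :
    wdist π g k ≤ wdist π g h + wdist π h k := by
  obtain ⟨l₁, hlen₁, hl₁, hprod₁⟩ := exists_list_length_eq_wdist hπ g h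
  obtain ⟨l₂, hlen₂, hl₂, hprod₂⟩ := exists_list_length_eq_wdist hπ h k
  calc wdist π g k ≤ (l₁ ++ l₂).length :=
        wdist_le_length (by simpa [or_imp, forall_and] using ⟨hl₁, hl₂⟩)
          (by simp [hprod₁, hprod₂, mul_assoc])
    _ = wdist π g h + wdist π h k := by simp [hlen₁, hlen₂]

lemma wdist_take_le (w : List Γ) {m m' E : ℕ} (h : m ≤ m' + E) (h' : m' ≤ m + E) :
    wdist π (evalW π (w.take m)) (evalW π (w.take m')) ≤ E := by
  wlog hle : m ≤ m' generalizing m m'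
  · rw [wdist_comm]; exact this h' h (by omega)
  obtain ⟨t, rfl⟩ := Nat.exists_eq_add_of_le hle
  calc _ ≤ ((w.drop m).take t).length := by
        refine wdist_le_length (l := ((w.drop m).take t).map (π ∘ FreeMonoid.of)) ?_ ?_ |>.trans
          (by simp)
        · simp only [List.mem_map, Function.comp_apply]
          rintro _ ⟨a, -, rfl⟩
          exact Or.inl ⟨a, rfl⟩
        · rw [List.take_add, evalW_append, ← evalW_eq_prod, inv_mul_cancel_left]
    _ ≤ E := by simp; omega

lemma finite_setOf_wdist_one_le [Finite Γ] (hπ : Function.Surjective π) (r : ℕ) :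
    {g : G | wdist π 1 g ≤ r}.Finite := by
  have : Finite (gens π) := ((Set.finite_range _).union (Set.finite_range _)).to_subtype
  refine ((List.finite_length_le (gens π) r).image fun l => (l.map Subtype.val).prod).subset ?_
  intro g hg
  obtain ⟨l, hlen, hl, hprod⟩ := exists_list_length_eq_wdist hπ 1 g
  refine ⟨l.attach.map fun x => ⟨x.1, hl x.1 x.2⟩, by simpa [hlen] using hg, ?_⟩
  simp [hprod]

end WordMetric

section LetterMap

variable {Λ Γ G : Type*} [Group G] {ρ : FreeMonoid Λ →* G} {π : FreeMonoid Γ →* G}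
  {ι : Λ → Γ}

lemma evalW_map (hι : π.comp (FreeMonoid.map ι) = ρ) (u : List Λ) :
    evalW π (u.map ι) = evalW ρ u :=
  DFunLike.congr_fun hι (FreeMonoid.ofList u)

lemma wdist_le_of_comp_map (hι : π.comp (FreeMonoid.map ι) = ρ) (hρ : Function.Surjective ρ)
    (g h : G) : wdist π g h ≤ wdist ρ g h := by
  obtain ⟨l, hlen, hl, hprod⟩ := exists_list_length_eq_wdist hρ g h
  refine hlen ▸ wdist_le_length (fun x hx => ?_) hprod
  have hof (a : Λ) : π (FreeMonoid.of (ι a)) = ρ (FreeMonoid.of a) :=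
    DFunLike.congr_fun hι (FreeMonoid.of a)
  rcases hl x hx with ⟨a, rfl⟩ | ⟨a, rfl⟩
  · exact Or.inl ⟨ι a, hof a⟩
  · exact Or.inr ⟨ι a, congrArg Inv.inv (hof a)⟩

lemma surjective_of_comp_map (hι : π.comp (FreeMonoid.map ι) = ρ)
    (hρ : Function.Surjective ρ) : Function.Surjective π :=
  fun g => let ⟨x, hx⟩ := hρ g; ⟨FreeMonoid.map ι x, (DFunLike.congr_fun hι x).trans hx⟩

end LetterMap

end Auto

namespace Language

variable {α β : Type*} {ι : α → β} {L : Language α}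

lemma mem_map_iff {w : List β} : w ∈ L.map ι ↔ ∃ u ∈ L, u.map ι = w := Iff.rfl

lemma leftQuotient_map (hι : Function.Injective ι) (x : List α) :
    (L.map ι).leftQuotient (x.map ι) = (L.leftQuotient x).map ι := by
  ext y
  simp only [mem_leftQuotient, mem_map_iff]
  constructor
  · rintro ⟨w, hw, hwxy⟩
    obtain ⟨x', y', rfl, hx', rfl⟩ := List.map_eq_append_iff.mp hwxy
    obtain rfl := List.map_injective_iff.mpr hι hx'
    exact ⟨y', hw, rfl⟩
  · rintro ⟨y', hy', rfl⟩
    exact ⟨x ++ y', hy', List.map_append⟩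

lemma leftQuotient_map_of_notMem_range {x : List β} (hx : x ∉ Set.range (List.map ι)) :
    (L.map ι).leftQuotient x = 0 := by
  ext y
  simp only [mem_leftQuotient, mem_map_iff]
  refine iff_of_false ?_ (Language.notMem_zero y)
  rintro ⟨w, -, hw⟩
  obtain ⟨x', -, -, hx', -⟩ := List.map_eq_append_iff.mp hw
  exact hx ⟨x', hx'⟩

lemma IsRegular.map (hι : Function.Injective ι) (hL : L.IsRegular) : (L.map ι).IsRegular := by
  refine .of_finite_range_leftQuotient <|
    ((hL.finite_range_leftQuotient.image (Language.map ι)).insert 0).subset ?_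
  rintro _ ⟨x, rfl⟩
  by_cases hx : x ∈ Set.range (List.map ι)
  · obtain ⟨x', rfl⟩ := hx
    exact Or.inr ⟨_, ⟨x', rfl⟩, (leftQuotient_map hι x').symm⟩
  · exact Or.inl (leftQuotient_map_of_notMem_range hx)

end Language

namespace Auto

section Departure

variable {Γ G : Type*} [Group G] {π : FreeMonoid Γ →* G} {L : Language Γ}

def IsShortestRep (π : FreeMonoid Γ →* G) (L : Language Γ) (w : List Γ) : Prop :=
  w ∈ L ∧ ∀ w' ∈ L, evalW π w' = evalW π w → w.length ≤ w'.length

/-- A natural-number valued departure function (`IsDepartureFunction`) for the single word `w`. -/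
def HasDeparture (π : FreeMonoid Γ →* G) (D : ℕ → ℕ) (w : List Γ) : Prop :=
  ∀ r s t, s + t ≤ w.length →
    wdist π (evalW π (w.take s)) (evalW π (w.take (s + t))) ≤ r → t ≤ D r

lemma exists_isShortestRep {u : List Γ} (hu : u ∈ L) :
    ∃ w, IsShortestRep π L w ∧ evalW π w = evalW π u := by
  obtain ⟨w, ⟨hwL, hwu⟩, hmin⟩ := (measure List.length).wf.has_min
    {w | w ∈ L ∧ evalW π w = evalW π u} ⟨u, hu, rfl⟩
  exact ⟨w, ⟨hwL, fun w' hw' he => not_lt.mp (hmin w' ⟨hw', he.trans hwu⟩)⟩, hwu⟩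

/-- Cut and paste: `y` can be replaced by `y'` inside `x ++ y ++ z` without leaving `L`, because
the left quotients (the states of the minimal automaton) after `x ++ y'` and `x ++ y` agree. -/
lemma length_le_of_leftQuotient_eq {x y z x' y' : List Γ} (hw : IsShortestRep π L (x ++ y ++ z))
    (hx : L.leftQuotient x = L.leftQuotient x')
    (hxy : L.leftQuotient (x ++ y) = L.leftQuotient (x' ++ y'))
    (hy : evalW π y' = evalW π y) : y.length ≤ y'.length := by
  have hz : z ∈ L.leftQuotient (x ++ y') := by
    rw [Language.leftQuotient_append, hx, ← Language.leftQuotient_append, ← hxy,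
      Language.mem_leftQuotient]
    exact hw.1
  have := hw.2 _ hz (by simp [hy])
  simpa using this

theorem exists_hasDeparture_of_isShortestRep [Finite Γ] (hπ : Function.Surjective π)
    (hL : L.IsRegular) :
    ∃ D : ℕ → ℕ, ∀ w, IsShortestRep π L w → HasDeparture π D w := by
  suffices h : ∀ r, ∃ d, ∀ x y z, IsShortestRep π L (x ++ y ++ z) →
      wdist π 1 (evalW π y) ≤ r → y.length ≤ d by
    choose D hD using h
    refine ⟨D, fun w hw r s t hst hr => ?_⟩
    have hsplit : w.take s ++ (w.drop s).take t ++ w.drop (s + t) = w := by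
      rw [← List.take_add, List.take_append_drop]
    have hlen : ((w.drop s).take t).length = t := by simp; omega
    rw [List.take_add, evalW_append, ← mul_one (evalW π (w.take s)), mul_assoc, one_mul,
      wdist_mul_left] at hr
    exact hlen ▸ hD r _ _ _ (hsplit ▸ hw) hr
  intro r
  let Q := Set.range L.leftQuotient
  let lengths (q : Language Γ × Language Γ × G) : Set ℕ :=
    {t | ∃ x y z, IsShortestRep π L (x ++ y ++ z) ∧
      (L.leftQuotient x, L.leftQuotient (x ++ y), evalW π y) = q ∧ y.length = t}
  have hsub (q) : (lengths q).Subsingleton := by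
    rintro _ ⟨x, y, z, hw, hq, rfl⟩ _ ⟨x', y', z', hw', hq', rfl⟩
    simp only [← hq', Prod.mk.injEq] at hq
    obtain ⟨hx, hxy, hy⟩ := hq
    exact le_antisymm (length_le_of_leftQuotient_eq hw hx hxy hy.symm)
      (length_le_of_leftQuotient_eq hw' hx.symm hxy.symm hy)
  have hfin : (⋃ q ∈ Q ×ˢ Q ×ˢ {g | wdist π 1 g ≤ r}, lengths q).Finite :=
    (hL.finite_range_leftQuotient.prod (hL.finite_range_leftQuotient.prod
      (finite_setOf_wdist_one_le hπ r))).biUnion fun q _ => (hsub q).finite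
  obtain ⟨d, hd⟩ := hfin.bddAbove
  exact ⟨d, fun x y z hw hy => hd (Set.mem_biUnion (x := (_, _, _))
    ⟨⟨x, rfl⟩, ⟨x ++ y, rfl⟩, hy⟩ ⟨x, y, z, hw, rfl, rfl⟩)⟩

end Departure

section Reparametrization

open Filter

lemma surjective_of_le_succ {f : ℕ → ℕ} (h0 : f 0 = 0) (hstep : ∀ t, f (t + 1) ≤ f t + 1)
    (hunb : ∀ m, ∃ t, m ≤ f t) : Function.Surjective f := by
  classical
  intro m
  have hmin := Nat.find_min (hunb m) (m := Nat.find (hunb m) - 1)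
  have hspec := Nat.find_spec (hunb m)
  rcases h : Nat.find (hunb m) with _ | t
  · exact ⟨0, by rw [h] at hspec; omega⟩
  · rw [h, Nat.add_sub_cancel] at hmin
    rw [h] at hspec
    exact ⟨t + 1, by have := hmin (by omega); have := hstep t; omega⟩

def stairWalk (F : ℕ → ℕ) : ℕ → ℕ × ℕ
  | 0 => (0, 0)
  | t + 1 =>
    let p := stairWalk F t
    if p.2 < F p.1 then (p.1, p.2 + 1) else (p.1 + 1, p.2)

lemma stairWalk_succ (F : ℕ → ℕ) (t : ℕ) :
    (stairWalk F (t + 1) = ((stairWalk F t).1, (stairWalk F t).2 + 1) ∧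
        (stairWalk F t).2 < F (stairWalk F t).1) ∨
      (stairWalk F (t + 1) = ((stairWalk F t).1 + 1, (stairWalk F t).2) ∧
        F (stairWalk F t).1 ≤ (stairWalk F t).2) := by
  simp only [stairWalk]
  split_ifs with h
  · exact Or.inl ⟨rfl, h⟩
  · exact Or.inr ⟨rfl, not_lt.mp h⟩

lemma stairWalk_fst_add_snd (F : ℕ → ℕ) (t : ℕ) :
    (stairWalk F t).1 + (stairWalk F t).2 = t := by
  induction t with
  | zero => rfl
  | succ t ih =>
    rcases stairWalk_succ F t with ⟨h, -⟩ | ⟨h, -⟩ <;> rw [h] <;> dsimp only <;> omega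

lemma stairWalk_mem_band {F : ℕ → ℕ} {K : ℕ} (hF : Monotone F) (h0 : F 0 ≤ K)
    (hstep : ∀ n, F (n + 1) ≤ F n + K) (t : ℕ) :
    (stairWalk F t).2 ≤ F (stairWalk F t).1 ∧
      F (stairWalk F t).1 ≤ (stairWalk F t).2 + K := by
  induction t with
  | zero => exact ⟨Nat.zero_le _, by simpa [stairWalk] using h0⟩
  | succ t ih =>
    rcases stairWalk_succ F t with ⟨h, hlt⟩ | ⟨h, hle⟩ <;> rw [h] <;> dsimp only
    · exact ⟨hlt, by omega⟩
    · exact ⟨ih.1.trans (hF (Nat.le_succ _)), by have := hstep (stairWalk F t).1; omega⟩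

lemma exists_reparam_of_monotone {F : ℕ → ℕ} {K : ℕ} (hF : Monotone F) (h0 : F 0 ≤ K)
    (hstep : ∀ n, F (n + 1) ≤ F n + K) (htend : Tendsto F atTop atTop) :
    ∃ φ ψ : ℕ → ℕ, Monotone φ ∧ Monotone ψ ∧ Function.Surjective φ ∧
      Function.Surjective ψ ∧ ∀ t, ψ t ≤ F (φ t) ∧ F (φ t) ≤ ψ t + K := by
  set φ := fun t => (stairWalk F t).1
  set ψ := fun t => (stairWalk F t).2
  have hband := stairWalk_mem_band hF h0 hstep
  have hsum := stairWalk_fst_add_snd F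
  have hsucc (t : ℕ) : φ t ≤ φ (t + 1) ∧ φ (t + 1) ≤ φ t + 1 ∧ ψ t ≤ ψ (t + 1) ∧
      ψ (t + 1) ≤ ψ t + 1 := by
    rcases stairWalk_succ F t with ⟨h, -⟩ | ⟨h, -⟩ <;> simp only [φ, ψ, h] <;> omega
  have hφ : Monotone φ := monotone_nat_of_le_succ fun t => (hsucc t).1
  have hφunb (m : ℕ) : m ≤ φ (m + F m) := by
    by_contra! hlt
    have := (hband (m + F m)).1.trans (hF hlt.le)
    have := hsum (m + F m)
    simp only [φ] at hlt
    omega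
  have hψunb (m : ℕ) : ∃ t, m ≤ ψ t := by
    obtain ⟨n, hn⟩ := (tendsto_atTop_atTop.mp htend) (m + K)
    refine ⟨n + F n, ?_⟩
    have := hn _ (hφunb n)
    have := (hband (n + F n)).2
    simp only [φ, ψ] at *
    omega
  refine ⟨φ, ψ, hφ, monotone_nat_of_le_succ fun t => (hsucc t).2.2.1,
    surjective_of_le_succ rfl (fun t => (hsucc t).2.1) fun m => ⟨_, hφunb m⟩,
    surjective_of_le_succ rfl (fun t => (hsucc t).2.2.2) hψunb, hband⟩

lemma le_add_mul_of_return {f : ℕ → ℕ} {K R : ℕ}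
    (hstep : ∀ n, f (n + 1) ≤ f n + K ∧ f n ≤ f (n + 1) + K)
    (hret : ∀ n n', n < n' → f n' ≤ f n → f n ≤ f n' + K → n' - n ≤ R)
    (htend : Tendsto f atTop atTop) {n n' : ℕ} (hnn' : n ≤ n') :
    f n ≤ f n' + K * (R + 1) := by
  classical
  by_contra! hlt
  have hdown (k : ℕ) : f n ≤ f (n + k) + K * k := by
    induction k with
    | zero => simp
    | succ k ih => have := (hstep (n + k)).2; rw [← add_assoc, mul_add_one]; omega
  have hK : K ≤ K * (R + 1) := Nat.le_mul_of_pos_right K (Nat.succ_pos R)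
  -- the first index after `n'` at which `f` climbs back to within `K` of `f n`
  have hex : ∃ m, n' < m ∧ f n ≤ f m + K := by
    obtain ⟨i, hi⟩ := (tendsto_atTop_atTop.mp htend) (f n)
    exact ⟨max i (n' + 1), by omega, (hi _ (le_max_left _ _)).trans (Nat.le_add_right _ _)⟩
  obtain ⟨hn'm, hback⟩ := Nat.find_spec hex
  set m := Nat.find hex
  have hprev : f (m - 1) + K < f n := by
    by_cases hm : m - 1 = n'
    · rw [hm]; omega
    · have := Nat.find_min hex (m := m - 1) (by omega)
      omega
  have hbelow : f m < f n := by
    have := (hstep (m - 1)).1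
    rw [Nat.sub_add_cancel (by omega)] at this
    omega
  have hRm := hret n m (by omega) hbelow.le hback
  have hgap : K * (R + 1) < K * (n' - n) := by
    have := hdown (n' - n)
    rw [Nat.add_sub_cancel' hnn'] at this
    omega
  have := Nat.lt_of_mul_lt_mul_left hgap
  omega

lemma exists_monotone_near {f : ℕ → ℕ} {K E : ℕ} (hstep : ∀ n, f (n + 1) ≤ f n + K)
    (hcoarse : ∀ n n', n ≤ n' → f n ≤ f n' + E) :
    ∃ F : ℕ → ℕ, Monotone F ∧ F 0 = f 0 ∧ (∀ n, F (n + 1) ≤ F n + K) ∧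
      ∀ n, f n ≤ F n ∧ F n ≤ f n + E := by
  refine ⟨fun n => (Finset.range (n + 1)).sup f, fun n n' h => Finset.sup_mono
    (Finset.range_subset_range.mpr (by omega)), by simp, fun n => Finset.sup_le fun m hm => ?_,
    fun n => ⟨Finset.le_sup (by simp),
      Finset.sup_le fun m hm => hcoarse m n (by simp at hm; omega)⟩⟩
  rcases Nat.lt_or_ge m (n + 1) with hm' | hm'
  · exact (Finset.le_sup (f := f) (Finset.mem_range.mpr hm')).trans (Nat.le_add_right _ _)
  · obtain rfl : m = n + 1 := by simp at hm; omega
    exact (hstep n).trans (Nat.add_le_add_right (Finset.le_sup (by simp)) K)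

theorem exists_reparam_of_return {f : ℕ → ℕ} {K R J : ℕ}
    (hstep : ∀ n, f (n + 1) ≤ f n + K ∧ f n ≤ f (n + 1) + K)
    (hret : ∀ n n', n < n' → f n' ≤ f n → f n ≤ f n' + K → n' - n ≤ R)
    (htend : Tendsto f atTop atTop) (h0 : f 0 ≤ J) :
    ∃ φ ψ : ℕ → ℕ, Monotone φ ∧ Monotone ψ ∧ Function.Surjective φ ∧
      Function.Surjective ψ ∧
      ∀ t, ψ t ≤ f (φ t) + K * (R + 1) ∧ f (φ t) ≤ ψ t + max J K := by
  obtain ⟨F, hF, hF0, hFstep, hfF⟩ := exists_monotone_near (fun n => (hstep n).1)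
    fun _ _ h => le_add_mul_of_return hstep hret htend h
  obtain ⟨φ, ψ, hφ, hψ, hφs, hψs, hφψ⟩ := exists_reparam_of_monotone (K := max J K) hF
    (hF0 ▸ h0.trans (le_max_left _ _))
    (fun n => (hFstep n).trans (Nat.add_le_add_left (le_max_right _ _) _))
    (tendsto_atTop_mono (fun n => (hfF n).1) htend)
  exact ⟨φ, ψ, hφ, hψ, hφs, hψs, fun t =>
    ⟨(hφψ t).1.trans (hfF _).2, (hfF _).1.trans (hφψ t).2⟩⟩

end Reparametrization

section Staircase

open Filter

variable {Γ G : Type*} [Group G] {π : FreeMonoid Γ →* G} {u v : List Γ} {D : ℕ → ℕ}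

lemma HasDeparture.min_length_le (hv : HasDeparture π D v) {m m' r : ℕ}
    (h : wdist π (evalW π (v.take m)) (evalW π (v.take m')) ≤ r) :
    min m' v.length ≤ min m v.length + D r := by
  rw [List.take_eq_take_min (i := m), List.take_eq_take_min (i := m')] at h
  by_cases hle : min m v.length ≤ min m' v.length
  · have := hv r (min m v.length) (min m' v.length - min m v.length) (by omega)
      (by rwa [Nat.add_sub_cancel' hle])
    omega
  · omega

variable {f : ℕ → ℕ} {N : ℕ}

lemma eq_min_length_add (hle : ∀ n ≤ u.length, f n ≤ v.length)
    (hgt : ∀ n, u.length < n → f n = v.length + (n - u.length)) (n : ℕ) :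
    f n = min (f n) v.length + (n - u.length) := by
  rcases le_or_gt n u.length with h | h
  · have := hle n h; omega
  · have := hgt n h; omega

lemma step_le_of_near (hπ : Function.Surjective π) (hv : HasDeparture π D v)
    (hle : ∀ n ≤ u.length, f n ≤ v.length)
    (hgt : ∀ n, u.length < n → f n = v.length + (n - u.length))
    (hf : ∀ n, wdist π (evalW π (u.take n)) (evalW π (v.take (f n))) ≤ N) (n : ℕ) :
    f (n + 1) ≤ f n + (D (2 * N + 1) + 1) ∧ f n ≤ f (n + 1) + (D (2 * N + 1) + 1) := by
  have hb : wdist π (evalW π (v.take (f n))) (evalW π (v.take (f (n + 1)))) ≤ 2 * N + 1 :=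
    calc _ ≤ wdist π (evalW π (v.take (f n))) (evalW π (u.take n)) +
          (wdist π (evalW π (u.take n)) (evalW π (u.take (n + 1))) +
            wdist π (evalW π (u.take (n + 1))) (evalW π (v.take (f (n + 1))))) :=
          (wdist_triangle hπ _ _ _).trans (Nat.add_le_add_left (wdist_triangle hπ _ _ _) _)
      _ ≤ N + (1 + N) := by
          rw [wdist_comm]
          exact Nat.add_le_add (hf n) (Nat.add_le_add (wdist_take_le u (by omega) (by omega))
            (hf (n + 1)))
      _ = 2 * N + 1 := by ring
  have h₁ := hv.min_length_le hb
  have h₂ := hv.min_length_le (wdist_comm (π := π) _ _ ▸ hb)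
  have e₁ := eq_min_length_add hle hgt n
  have e₂ := eq_min_length_add hle hgt (n + 1)
  omega

lemma sub_le_of_near (hπ : Function.Surjective π) (hu : HasDeparture π D u)
    (hle : ∀ n ≤ u.length, f n ≤ v.length)
    (hgt : ∀ n, u.length < n → f n = v.length + (n - u.length))
    (hf : ∀ n, wdist π (evalW π (u.take n)) (evalW π (v.take (f n))) ≤ N) {K n n' : ℕ}
    (hnn' : n < n') (h₁ : f n' ≤ f n) (h₂ : f n ≤ f n' + K) : n' - n ≤ D (2 * N + K) := by
  have ha : wdist π (evalW π (u.take n)) (evalW π (u.take n')) ≤ 2 * N + K :=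
    calc _ ≤ wdist π (evalW π (u.take n)) (evalW π (v.take (f n))) +
          (wdist π (evalW π (v.take (f n))) (evalW π (v.take (f n'))) +
            wdist π (evalW π (v.take (f n'))) (evalW π (u.take n'))) :=
          (wdist_triangle hπ _ _ _).trans (Nat.add_le_add_left (wdist_triangle hπ _ _ _) _)
      _ ≤ N + (K + N) := by
          rw [wdist_comm _ (evalW π (u.take n'))]
          exact Nat.add_le_add (hf n) (Nat.add_le_add (wdist_take_le v (by omega) (by omega))
            (hf n'))
      _ = 2 * N + K := by ring
  have := hu.min_length_le ha
  have e₁ := eq_min_length_add hle hgt n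
  have e₂ := eq_min_length_add hle hgt n'
  omega

theorem exists_async_of_nbhdIn (hπ : Function.Surjective π) (N : ℕ) (D : ℕ → ℕ) :
    ∃ C : ℕ, ∀ u v : List Γ, HasDeparture π D u → HasDeparture π D v →
      wdist π (evalW π u) (evalW π v) ≤ 1 →
      NbhdIn π N (Set.range fun n => evalW π (u.take n))
        (Set.range fun n => evalW π (v.take n)) →
      ∃ φ ψ : ℕ → ℕ, Monotone φ ∧ Monotone ψ ∧ Function.Surjective φ ∧
        Function.Surjective ψ ∧
        ∀ t, wdist π (evalW π (u.take (φ t))) (evalW π (v.take (ψ t))) ≤ C := by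
  set N' := max N 1
  set K := D (2 * N' + 1) + 1
  set R := D (2 * N' + K)
  refine ⟨N' + max (K * (R + 1)) (max (D N') K), fun u v hu hv hend hnbhd => ?_⟩
  have hnear (n : ℕ) : ∃ m, m ≤ v.length ∧
      wdist π (evalW π (u.take n)) (evalW π (v.take m)) ≤ N' := by
    obtain ⟨_, ⟨m, rfl⟩, hm⟩ := hnbhd _ ⟨n, rfl⟩
    exact ⟨min m v.length, min_le_right _ _,
      List.take_eq_take_min (l := v) ▸ hm.trans (le_max_left _ _)⟩
  choose g hg using hnear
  -- beyond the end of `u`, run at unit speed beyond the end of `v`, so that `f` tends to infinity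
  set f : ℕ → ℕ := fun n => if n ≤ u.length then g n else v.length + (n - u.length)
  have hle (n) (hn : n ≤ u.length) : f n ≤ v.length := by simpa [f, hn] using (hg n).1
  have hgt (n) (hn : u.length < n) : f n = v.length + (n - u.length) := if_neg hn.not_ge
  have hf (n : ℕ) : wdist π (evalW π (u.take n)) (evalW π (v.take (f n))) ≤ N' := by
    rcases le_or_gt n u.length with hn | hn
    · simpa [f, hn] using (hg n).2
    · rw [hgt n hn, List.take_of_length_le (by omega), List.take_of_length_le (by omega)]
      exact hend.trans (le_max_right _ _)
  have hf0 : f 0 ≤ D N' := by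
    have := hv.min_length_le (m := 0) (by simpa using hf 0)
    have := eq_min_length_add hle hgt 0
    omega
  have htend : Tendsto f atTop atTop :=
    tendsto_atTop_mono (fun n => (eq_min_length_add hle hgt n).symm ▸ Nat.le_add_left _ _)
      (tendsto_sub_atTop_nat u.length)
  obtain ⟨φ, ψ, hφ, hψ, hφs, hψs, hφψ⟩ := exists_reparam_of_return (K := K) (R := R)
    (step_le_of_near hπ hv hle hgt hf) (fun n n' => sub_le_of_near hπ hu hle hgt hf) htend hf0
  refine ⟨φ, ψ, hφ, hψ, hφs, hψs, fun t => ?_⟩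
  have := hφψ t
  exact (wdist_triangle hπ _ (evalW π (v.take (f (φ t)))) _).trans
    (Nat.add_le_add (hf (φ t)) (wdist_take_le v (by omega) (by omega)))

end Staircase

section TameReps

variable {Λ Γ G : Type*} [Group G] {π : FreeMonoid Γ →* G}

def HasTameReps (π : FreeMonoid Γ →* G) (L : Language Γ) : Prop :=
  ∃ (N : ℕ) (D : ℕ → ℕ), ∀ w ∈ L, ∃ w' ∈ L, evalW π w' = evalW π w ∧
    (∀ n, wdist π (evalW π (w.take n)) (evalW π (w'.take n)) ≤ N) ∧ HasDeparture π D w'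

lemma HasDeparture.mono {D D' : ℕ → ℕ} {w : List Γ} (h : HasDeparture π D w)
    (hD : ∀ r, D r ≤ D' r) : HasDeparture π D' w :=
  fun r s t hst hr => (h r s t hst hr).trans (hD r)

lemma HasTameReps.add {L₁ L₂ : Language Γ} (h₁ : HasTameReps π L₁)
    (h₂ : HasTameReps π L₂) : HasTameReps π (L₁ + L₂) := by
  obtain ⟨N₁, D₁, h₁⟩ := h₁
  obtain ⟨N₂, D₂, h₂⟩ := h₂
  refine ⟨max N₁ N₂, D₁ ⊔ D₂, fun w hw => ?_⟩
  rcases hw with hw | hw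
  · obtain ⟨w', hw', he, hN, hD⟩ := h₁ w hw
    exact ⟨w', Or.inl hw', he, fun n => (hN n).trans (le_max_left _ _),
      hD.mono fun r => le_max_left _ _⟩
  · obtain ⟨w', hw', he, hN, hD⟩ := h₂ w hw
    exact ⟨w', Or.inr hw', he, fun n => (hN n).trans (le_max_right _ _),
      hD.mono fun r => le_max_right _ _⟩

theorem hasTameReps_of_isRegular [Finite Γ] {L : Language Γ} (hπ : Function.Surjective π)
    (hL : L.IsRegular) (hft : ∃ N : ℕ, ∀ u ∈ L, ∀ v ∈ L, evalW π u = evalW π v →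
      ∀ n, wdist π (evalW π (u.take n)) (evalW π (v.take n)) ≤ N) :
    HasTameReps π L := by
  obtain ⟨N, hN⟩ := hft
  obtain ⟨D, hD⟩ := exists_hasDeparture_of_isShortestRep hπ hL
  refine ⟨N, D, fun w hw => ?_⟩
  obtain ⟨w', hw', he⟩ := exists_isShortestRep (π := π) hw
  exact ⟨w', hw'.1, he, hN w hw w' hw'.1 he.symm, hD w' hw'⟩

variable {ρ : FreeMonoid Λ →* G} {L : Language Λ} {ι : Λ → Γ}

lemma IsAutomaticStructure.surjective (h : IsAutomaticStructure ρ L) : Function.Surjective ρ :=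
  fun g => let ⟨_, _, hw⟩ := h.onto g; ⟨_, hw⟩

lemma IsAutomaticStructure.exists_fellowTravel_map (h : IsAutomaticStructure ρ L)
    (hι : π.comp (FreeMonoid.map ι) = ρ) :
    ∃ N : ℕ, ∀ u ∈ L.map ι, ∀ v ∈ L.map ι, evalW π u = evalW π v →
      ∀ n, wdist π (evalW π (u.take n)) (evalW π (v.take n)) ≤ N := by
  obtain ⟨N, hN⟩ := h.ft
  refine ⟨N, ?_⟩
  rintro _ ⟨u, hu, rfl⟩ _ ⟨v, hv, rfl⟩ he n
  rw [evalW_map hι, evalW_map hι] at he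
  have := hN u hu v hv (by simp [he]) n
  rw [← List.map_take, ← List.map_take, evalW_map hι, evalW_map hι]
  exact (wdist_le_of_comp_map hι h.surjective _ _).trans (by exact_mod_cast this)

theorem IsAutomaticStructure.hasTameReps_map [Finite Γ] (h : IsAutomaticStructure ρ L)
    (hι : π.comp (FreeMonoid.map ι) = ρ) (hinj : Function.Injective ι) :
    HasTameReps π (L.map ι) :=
  hasTameReps_of_isRegular (surjective_of_comp_map hι h.surjective)
    (Language.IsRegular.map hinj h.regular) (h.exists_fellowTravel_map hι)

end TameReps

section Async

variable {Γ G : Type*} [Group G] {π : FreeMonoid Γ →* G} {L : Language Γ}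

/-- The fellow traveller condition in `IsAsyncAutomaticStructure`. -/
def AsyncFellowTravel (π : FreeMonoid Γ →* G) (L : Language Γ) : Prop :=
  ∃ p : ℕ, ∀ u ∈ L, ∀ v ∈ L, wdist π (evalW π u) (evalW π v) ≤ 1 →
    ∃ φ ψ : ℕ → ℕ, Monotone φ ∧ Monotone ψ ∧ Function.Surjective φ ∧
      Function.Surjective ψ ∧
      ∀ t, wdist π (evalW π (u.take (φ t))) (evalW π (v.take (ψ t))) ≤ p

lemma AsyncFellowTravel.hausClose (h : AsyncFellowTravel π L) : HausClose π L := by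
  obtain ⟨p, hp⟩ := h
  refine ⟨p, fun u hu v hv huv => ?_⟩
  obtain ⟨φ, ψ, -, -, hφs, hψs, hφψ⟩ := hp u hu v hv huv
  constructor
  · rintro _ ⟨n, rfl⟩
    obtain ⟨t, rfl⟩ := hφs n
    exact ⟨_, ⟨ψ t, rfl⟩, hφψ t⟩
  · rintro _ ⟨m, rfl⟩
    obtain ⟨t, rfl⟩ := hψs m
    exact ⟨_, ⟨φ t, rfl⟩, wdist_comm (π := π) _ _ ▸ hφψ t⟩

theorem HausClose.asyncFellowTravel (hπ : Function.Surjective π) (htame : HasTameReps π L)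
    (hH : HausClose π L) : AsyncFellowTravel π L := by
  obtain ⟨N₀, D, htame⟩ := htame
  obtain ⟨N, hN⟩ := hH
  obtain ⟨C, hC⟩ := exists_async_of_nbhdIn hπ N D
  refine ⟨N₀ + (C + N₀), fun u hu v hv huv => ?_⟩
  obtain ⟨u', hu', hue, hufell, hudep⟩ := htame u hu
  obtain ⟨v', hv', hve, hvfell, hvdep⟩ := htame v hv
  have huv' : wdist π (evalW π u') (evalW π v') ≤ 1 := by rwa [hue, hve]
  obtain ⟨φ, ψ, hφ, hψ, hφs, hψs, hφψ⟩ :=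
    hC u' v' hudep hvdep huv' (hN u' hu' v' hv' huv').1
  refine ⟨φ, ψ, hφ, hψ, hφs, hψs, fun t => ?_⟩
  calc _ ≤ wdist π (evalW π (u.take (φ t))) (evalW π (u'.take (φ t))) +
        (wdist π (evalW π (u'.take (φ t))) (evalW π (v'.take (ψ t))) +
          wdist π (evalW π (v'.take (ψ t))) (evalW π (v.take (ψ t)))) :=
        (wdist_triangle hπ _ _ _).trans (Nat.add_le_add_left (wdist_triangle hπ _ _ _) _)
    _ ≤ N₀ + (C + N₀) :=
        Nat.add_le_add (hufell _)
          (Nat.add_le_add (hφψ t) (wdist_comm (π := π) _ _ ▸ hvfell _))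

end Async

section Union

variable {A B G : Type*} [Group G] (π₁ : FreeMonoid A →* G) (π₂ : FreeMonoid B →* G)

lemma sumHom_comp_map_inl : (sumHom π₁ π₂).comp (FreeMonoid.map Sum.inl) = π₁ :=
  FreeMonoid.hom_eq fun _ => by simp [sumHom]

lemma sumHom_comp_map_inr : (sumHom π₁ π₂).comp (FreeMonoid.map Sum.inr) = π₂ :=
  FreeMonoid.hom_eq fun _ => by simp [sumHom]

lemma unionLang_eq (L₁ : Language A) (L₂ : Language B) :
    unionLang L₁ L₂ = L₁.map Sum.inl + L₂.map Sum.inr := by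
  ext w
  simp only [Language.mem_add, Language.mem_map_iff, eq_comm (b := w)]
  rfl

end Union

end Auto

theorem equivalent_iff_hausclose_general {A B G : Type*} [Fintype A] [Fintype B] [Group G]
    (π₁ : FreeMonoid A →* G)
    (π₂ : FreeMonoid B →* G)
    (L₁ : Language A) (L₂ : Language B)
    (h₁ : IsAutomaticStructure π₁ L₁) (h₂ : IsAutomaticStructure π₂ L₂) :
    LangEquivalent π₁ π₂ L₁ L₂ ↔ HausClose (sumHom π₁ π₂) (unionLang L₁ L₂) := by
  have hinl := sumHom_comp_map_inl π₁ π₂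
  have hinr := sumHom_comp_map_inr π₁ π₂
  refine ⟨fun h => AsyncFellowTravel.hausClose h.2.2, fun hH => ⟨?_, fun g => ?_, ?_⟩⟩
  · rw [unionLang_eq]
    exact (Language.IsRegular.map Sum.inl_injective h₁.regular).add
      (Language.IsRegular.map Sum.inr_injective h₂.regular)
  · obtain ⟨w, hw, rfl⟩ := h₁.onto g
    exact ⟨w.map Sum.inl, Or.inl ⟨w, hw, rfl⟩, evalW_map hinl w⟩
  · refine hH.asyncFellowTravel (surjective_of_comp_map hinl h₁.surjective) ?_
    rw [unionLang_eq]
    exact (h₁.hasTameReps_map hinl Sum.inl_injective).add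
      (h₂.hasTameReps_map hinr Sum.inr_injective)

/-- Two automatic structures `L₁` and `L₂` for the same group `G` are
equivalent if and only if `L₁ ∪ L₂` has the Hausdorff closeness property. -/
theorem equivalent_iff_hausclose {A B G : Type*} [Fintype A] [Fintype B] [Group G]
    (π₁ : FreeMonoid A →* G) (hπ₁ : Function.Surjective π₁)
    (π₂ : FreeMonoid B →* G) (hπ₂ : Function.Surjective π₂)
    (L₁ : Language A) (L₂ : Language B)
    (h₁ : IsAutomaticStructure π₁ L₁) (h₂ : IsAutomaticStructure π₂ L₂) :
    LangEquivalent π₁ π₂ L₁ L₂ ↔ HausClose (sumHom π₁ π₂) (unionLang L₁ L₂) :=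
  equivalent_iff_hausclose_general π₁ π₂ L₁ L₂ h₁ h₂
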